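/- Say that state z balances state i at (d,j) if either i is in P_d^j and z is in N_d^j, or i is in N_d^j and z is in P_d^j. State i is sign balanced if there exist d in {1,...,n} and an input j such that i is in the union of N_d^j and P_d^j, i is not in the intersection of N_d^j and P_d^j, and every state that balances i at (d,j) is sign strictly herdable. If every state in {1,...,n} is sign balanced, then the system is completely sign herdable: for every pair (A',B') with the same sign pattern as (A,B), the range of the controllability matrix of (A',B') contains an entrywise positive vector. -/
import Mathlib


/-- `k` is a walk of length `e + 1` from input `j` to state `i`: it visits the states
`k 0, k 1, …, k e`, ends at `i`, starts along a nonzero entry of `B`, and follows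
nonzero entries of `A`. -/
def IsWalk {n m : ℕ} (A : Matrix (Fin n) (Fin n) ℝ) (B : Matrix (Fin n) (Fin m) ℝ)
    (j : Fin m) (i : Fin n) {e : ℕ} (k : Fin (e + 1) → Fin n) : Prop :=
  k (Fin.last e) = i ∧ B (k 0) j ≠ 0 ∧ ∀ t : Fin e, A (k t.succ) (k t.castSucc) ≠ 0

/-- The weight of the walk `k 0, …, k e` from input `j`:
`B (k 0) j * ∏ₜ A (k (t+1)) (k t)`. -/
def walkWeight {n m : ℕ} (A : Matrix (Fin n) (Fin n) ℝ) (B : Matrix (Fin n) (Fin m) ℝ)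
    (j : Fin m) {e : ℕ} (k : Fin (e + 1) → Fin n) : ℝ :=
  B (k 0) j * ∏ t : Fin e, A (k t.succ) (k t.castSucc)

open Classical in
/-- `rho A B j i d` is the sum of the weights of all walks of length `d` from input `j`
to state `i` (zero if there are none, in particular for `d = 0`). -/
noncomputable def rho {n m : ℕ} (A : Matrix (Fin n) (Fin n) ℝ) (B : Matrix (Fin n) (Fin m) ℝ)
    (j : Fin m) (i : Fin n) : ℕ → ℝ
  | 0 => 0
  | e + 1 => ∑ k : Fin (e + 1) → Fin n,
      if IsWalk A B j i k then walkWeight A B j k else 0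

/-- `Pset A B j d` is the set of states reachable from input `j` by at least one walk of
length `d` of positive weight. -/
def Pset {n m : ℕ} (A : Matrix (Fin n) (Fin n) ℝ) (B : Matrix (Fin n) (Fin m) ℝ)
    (j : Fin m) : ℕ → Set (Fin n)
  | 0 => ∅
  | e + 1 => {i | ∃ k : Fin (e + 1) → Fin n, IsWalk A B j i k ∧ 0 < walkWeight A B j k}

/-- `Nset A B j d` is the set of states reachable from input `j` by at least one walk of
length `d` of negative weight. -/
def Nset {n m : ℕ} (A : Matrix (Fin n) (Fin n) ℝ) (B : Matrix (Fin n) (Fin m) ℝ)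
    (j : Fin m) : ℕ → Set (Fin n)
  | 0 => ∅
  | e + 1 => {i | ∃ k : Fin (e + 1) → Fin n, IsWalk A B j i k ∧ walkWeight A B j k < 0}

/-- The controllability matrix `C = [B, AB, …, A^{n-1} B]`; the column indexed by
`(d, j)` is the `j`-th column of `A^d B`. -/
def ctrb {n m : ℕ} (A : Matrix (Fin n) (Fin n) ℝ) (B : Matrix (Fin n) (Fin m) ℝ) :
    Matrix (Fin n) (Fin n × Fin m) ℝ := fun i p => (A ^ (p.1 : ℕ) * B) i p.2

/-- A vector is unisigned if all of its nonzero entries have the same sign. -/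
def Unisigned {n : ℕ} (k : Fin n → ℝ) : Prop :=
  ∀ a b : Fin n, k a ≠ 0 → k b ≠ 0 → Real.sign (k a) = Real.sign (k b)

/-- State `i` is strictly herdable with respect to the pair `(A, B)`: there is a
unisigned vector `k` in the range of the controllability matrix with `k i ≠ 0`. -/
def StrictlyHerdable {n m : ℕ} (A : Matrix (Fin n) (Fin n) ℝ)
    (B : Matrix (Fin n) (Fin m) ℝ) (i : Fin n) : Prop :=
  ∃ k : Fin n → ℝ, (∃ y : Fin n × Fin m → ℝ, (ctrb A B).mulVec y = k) ∧
    Unisigned k ∧ k i ≠ 0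

/-- `(A', B')` has the same sign pattern as `(A, B)`. -/
def SamePattern {n m : ℕ} (A A' : Matrix (Fin n) (Fin n) ℝ)
    (B B' : Matrix (Fin n) (Fin m) ℝ) : Prop :=
  (∀ p q, Real.sign (A' p q) = Real.sign (A p q)) ∧
    (∀ p q, Real.sign (B' p q) = Real.sign (B p q))

/-- State `z` balances state `i` at `(d, j)`: either `i ∈ P_d^j` and `z ∈ N_d^j`, or
`i ∈ N_d^j` and `z ∈ P_d^j`. -/
def Balances {n m : ℕ} (A : Matrix (Fin n) (Fin n) ℝ) (B : Matrix (Fin n) (Fin m) ℝ)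
    (z i : Fin n) (d : ℕ) (j : Fin m) : Prop :=
  (i ∈ Pset A B j d ∧ z ∈ Nset A B j d) ∨ (i ∈ Nset A B j d ∧ z ∈ Pset A B j d)

/-- State `i` is sign strictly herdable: it is strictly herdable for every pair with the
same sign pattern as `(A, B)`. -/
def SignStrictlyHerdable {n m : ℕ} (A : Matrix (Fin n) (Fin n) ℝ)
    (B : Matrix (Fin n) (Fin m) ℝ) (i : Fin n) : Prop :=
  ∀ (A' : Matrix (Fin n) (Fin n) ℝ) (B' : Matrix (Fin n) (Fin m) ℝ),
    SamePattern A A' B B' → StrictlyHerdable A' B' i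

/-- State `i` is sign balanced: there are `d ∈ {1,…,n}` and an input `j` with
`i ∈ N_d^j ∪ P_d^j`, `i ∉ N_d^j ∩ P_d^j`, and every state balancing `i` at `(d, j)` is
sign strictly herdable. -/
def SignBalanced {n m : ℕ} (A : Matrix (Fin n) (Fin n) ℝ)
    (B : Matrix (Fin n) (Fin m) ℝ) (i : Fin n) : Prop :=
  ∃ (d : ℕ) (j : Fin m), 1 ≤ d ∧ d ≤ n ∧
    i ∈ Nset A B j d ∪ Pset A B j d ∧ i ∉ Nset A B j d ∩ Pset A B j d ∧
    ∀ z : Fin n, Balances A B z i d j → SignStrictlyHerdable A B z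

set_option maxHeartbeats 1000000

private lemma isWalk_of_ne_zero {n m e : ℕ} {A : Matrix (Fin n) (Fin n) ℝ}
    {B : Matrix (Fin n) (Fin m) ℝ} {j : Fin m} {k : Fin (e + 1) → Fin n}
    (h : walkWeight A B j k ≠ 0) : IsWalk A B j (k (Fin.last e)) k := by
  refine ⟨rfl, ?_, ?_⟩
  · intro h0; exact h (by simp [walkWeight, h0])
  · intro t ht
    refine h ?_
    unfold walkWeight
    rw [Finset.prod_eq_zero (Finset.mem_univ t) ht, mul_zero]

private lemma walkWeight_snoc {n m e : ℕ} (A : Matrix (Fin n) (Fin n) ℝ)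
    (B : Matrix (Fin n) (Fin m) ℝ) (j : Fin m) (k' : Fin (e + 1) → Fin n) (x : Fin n) :
    walkWeight A B j (Fin.snoc k' x) = A x (k' (Fin.last e)) * walkWeight A B j k' := by
  unfold walkWeight
  rw [Fin.prod_univ_castSucc]
  simp only [Fin.succ_castSucc, Fin.snoc_castSucc, Fin.succ_last, Fin.snoc_last]
  have h0 : (Fin.snoc k' x : Fin (e + 1 + 1) → Fin n) 0 = k' 0 := by
    rw [show (0 : Fin (e + 1 + 1)) = Fin.castSucc (0 : Fin (e + 1)) from rfl,
      Fin.snoc_castSucc]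
  rw [h0]; ring

private lemma entry_eq_sum {n m : ℕ} (A : Matrix (Fin n) (Fin n) ℝ)
    (B : Matrix (Fin n) (Fin m) ℝ) (j : Fin m) :
    ∀ (e : ℕ) (i : Fin n), (A ^ e * B) i j =
      ∑ k : Fin (e + 1) → Fin n,
        if k (Fin.last e) = i then walkWeight A B j k else 0 := by
  intro e
  induction e with
  | zero =>
    intro i
    rw [pow_zero, Matrix.one_mul,
      ← Equiv.sum_comp (Equiv.funUnique (Fin 1) (Fin n)).symm]
    simp [walkWeight]
  | succ e ih =>
    intro i
    have h1 : (A ^ (e + 1) * B) i j = ∑ i' : Fin n, A i i' * (A ^ e * B) i' j := by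
      rw [pow_succ', Matrix.mul_assoc, Matrix.mul_apply]
    rw [h1, ← Equiv.sum_comp (Fin.snocEquiv (fun _ => Fin n))
        (fun k => if k (Fin.last (e + 1)) = i then walkWeight A B j k else 0),
      Fintype.sum_prod_type]
    simp only [Fin.snocEquiv_apply]
    have h2 : ∀ (x : Fin n) (k' : Fin (e + 1) → Fin n),
        (if (Fin.snoc k' x : Fin (e + 2) → Fin n) (Fin.last (e + 1)) = i
          then walkWeight A B j (Fin.snoc k' x) else 0)
        = if x = i then A x (k' (Fin.last e)) * walkWeight A B j k' else 0 := by
      intro x k'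
      rw [Fin.snoc_last, walkWeight_snoc]
    show _ = ∑ x : Fin n, ∑ k' : Fin (e + 1) → Fin n,
      (if (Fin.snoc k' x : Fin (e + 2) → Fin n) (Fin.last (e + 1)) = i
        then walkWeight A B j (Fin.snoc k' x) else 0)
    simp only [h2]
    have h3 : ∀ x : Fin n,
        (∑ k' : Fin (e + 1) → Fin n,
          if x = i then A x (k' (Fin.last e)) * walkWeight A B j k' else 0)
        = if x = i then
            (∑ k' : Fin (e + 1) → Fin n, A x (k' (Fin.last e)) * walkWeight A B j k')
          else 0 := by
      intro x; split <;> simp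
    rw [show (∑ x : Fin n, ∑ k' : Fin (e + 1) → Fin n,
          if x = i then A x (k' (Fin.last e)) * walkWeight A B j k' else 0)
        = ∑ x : Fin n, (if x = i then
            (∑ k' : Fin (e + 1) → Fin n, A x (k' (Fin.last e)) * walkWeight A B j k')
          else 0) from Finset.sum_congr rfl fun x _ => h3 x,
      Finset.sum_ite_eq' Finset.univ i]
    simp only [Finset.mem_univ, if_true]
    calc ∑ i' : Fin n, A i i' * (A ^ e * B) i' j
        = ∑ i' : Fin n, ∑ k' : Fin (e + 1) → Fin n,
            (if k' (Fin.last e) = i' then A i i' * walkWeight A B j k' else 0) := by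
          refine Finset.sum_congr rfl fun i' _ => ?_
          rw [ih i', Finset.mul_sum]
          exact Finset.sum_congr rfl fun k' _ => by rw [mul_ite, mul_zero]
      _ = ∑ k' : Fin (e + 1) → Fin n, ∑ i' : Fin n,
            (if k' (Fin.last e) = i' then A i i' * walkWeight A B j k' else 0) :=
          Finset.sum_comm
      _ = ∑ k' : Fin (e + 1) → Fin n, A i (k' (Fin.last e)) * walkWeight A B j k' := by
          refine Finset.sum_congr rfl fun k' _ => ?_
          rw [Finset.sum_ite_eq Finset.univ (k' (Fin.last e))]
          simp

private lemma mySignMul (x y : ℝ) : Real.sign (x * y) = Real.sign x * Real.sign y := by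
  rcases lt_trichotomy x 0 with hx | rfl | hx
  · rcases lt_trichotomy y 0 with hy | rfl | hy
    · rw [Real.sign_of_pos (mul_pos_of_neg_of_neg hx hy), Real.sign_of_neg hx,
        Real.sign_of_neg hy]; norm_num
    · simp [Real.sign_zero]
    · rw [Real.sign_of_neg (mul_neg_of_neg_of_pos hx hy), Real.sign_of_neg hx,
        Real.sign_of_pos hy]; norm_num
  · simp [Real.sign_zero]
  · rcases lt_trichotomy y 0 with hy | rfl | hy
    · rw [Real.sign_of_neg (mul_neg_of_pos_of_neg hx hy), Real.sign_of_pos hx,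
        Real.sign_of_neg hy]; norm_num
    · simp [Real.sign_zero]
    · rw [Real.sign_of_pos (mul_pos hx hy), Real.sign_of_pos hx, Real.sign_of_pos hy]
      norm_num

private noncomputable def mySignHom : ℝ →* ℝ where
  toFun := Real.sign
  map_one' := Real.sign_one
  map_mul' := mySignMul

private lemma mySignOne {x : ℝ} : Real.sign x = 1 ↔ 0 < x := by
  constructor
  · intro hsx
    rcases lt_trichotomy x 0 with hx | rfl | hx
    · rw [Real.sign_of_neg hx] at hsx; norm_num at hsx
    · rw [Real.sign_zero] at hsx; norm_num at hsx
    · exact hx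
  · exact Real.sign_of_pos

private lemma mySignNegOne {x : ℝ} : Real.sign x = -1 ↔ x < 0 := by
  constructor
  · intro hsx
    rcases lt_trichotomy x 0 with hx | rfl | hx
    · exact hx
    · rw [Real.sign_zero] at hsx; norm_num at hsx
    · rw [Real.sign_of_pos hx] at hsx; norm_num at hsx
  · exact Real.sign_of_neg

private lemma pos_iff_of_sign_eq {x y : ℝ} (h : Real.sign x = Real.sign y) :
    0 < x ↔ 0 < y := by rw [← mySignOne, ← mySignOne, h]

private lemma neg_iff_of_sign_eq {x y : ℝ} (h : Real.sign x = Real.sign y) :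
    x < 0 ↔ y < 0 := by rw [← mySignNegOne, ← mySignNegOne, h]

private lemma ne_iff_of_sign_eq {x y : ℝ} (h : Real.sign x = Real.sign y) :
    x ≠ 0 ↔ y ≠ 0 := by
  rw [ne_eq, ne_eq, ← Real.sign_eq_zero_iff, h, Real.sign_eq_zero_iff]

private lemma walkWeight_sign {n m e : ℕ} {A A' : Matrix (Fin n) (Fin n) ℝ}
    {B B' : Matrix (Fin n) (Fin m) ℝ} (hs : SamePattern A A' B B') (j : Fin m)
    (k : Fin (e + 1) → Fin n) :
    Real.sign (walkWeight A' B' j k) = Real.sign (walkWeight A B j k) := by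
  unfold walkWeight
  have hp : ∀ M : Matrix (Fin n) (Fin n) ℝ,
      Real.sign (∏ t : Fin e, M (k t.succ) (k t.castSucc))
        = ∏ t : Fin e, Real.sign (M (k t.succ) (k t.castSucc)) := fun M =>
    map_prod mySignHom _ _
  rw [mySignMul, mySignMul, hs.2, hp, hp]
  congr 1
  exact Finset.prod_congr rfl fun t _ => hs.1 _ _

private lemma isWalk_iff {n m e : ℕ} {A A' : Matrix (Fin n) (Fin n) ℝ}
    {B B' : Matrix (Fin n) (Fin m) ℝ} (hs : SamePattern A A' B B') (j : Fin m)
    (i : Fin n) (k : Fin (e + 1) → Fin n) :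
    IsWalk A' B' j i k ↔ IsWalk A B j i k := by
  unfold IsWalk
  rw [ne_iff_of_sign_eq (hs.2 (k 0) j)]
  constructor <;> rintro ⟨h1, h2, h3⟩ <;> refine ⟨h1, h2, fun t => ?_⟩
  · exact (ne_iff_of_sign_eq (hs.1 (k t.succ) (k t.castSucc))).mp (h3 t)
  · exact (ne_iff_of_sign_eq (hs.1 (k t.succ) (k t.castSucc))).mpr (h3 t)

private lemma mem_Pset_iff {n m e : ℕ} {A A' : Matrix (Fin n) (Fin n) ℝ}
    {B B' : Matrix (Fin n) (Fin m) ℝ} (hs : SamePattern A A' B B') (j : Fin m)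
    (i : Fin n) : i ∈ Pset A' B' j (e + 1) ↔ i ∈ Pset A B j (e + 1) := by
  show (∃ k : Fin (e + 1) → Fin n, IsWalk A' B' j i k ∧ 0 < walkWeight A' B' j k) ↔ _
  constructor <;> rintro ⟨k, hw, hpos⟩ <;> refine ⟨k, ?_, ?_⟩
  · exact (isWalk_iff hs j i k).mp hw
  · exact (pos_iff_of_sign_eq (walkWeight_sign hs j k)).mp hpos
  · exact (isWalk_iff hs j i k).mpr hw
  · exact (pos_iff_of_sign_eq (walkWeight_sign hs j k)).mpr hpos

private lemma mem_Nset_iff {n m e : ℕ} {A A' : Matrix (Fin n) (Fin n) ℝ}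
    {B B' : Matrix (Fin n) (Fin m) ℝ} (hs : SamePattern A A' B B') (j : Fin m)
    (i : Fin n) : i ∈ Nset A' B' j (e + 1) ↔ i ∈ Nset A B j (e + 1) := by
  show (∃ k : Fin (e + 1) → Fin n, IsWalk A' B' j i k ∧ walkWeight A' B' j k < 0) ↔ _
  constructor <;> rintro ⟨k, hw, hneg⟩ <;> refine ⟨k, ?_, ?_⟩
  · exact (isWalk_iff hs j i k).mp hw
  · exact (neg_iff_of_sign_eq (walkWeight_sign hs j k)).mp hneg
  · exact (isWalk_iff hs j i k).mpr hw
  · exact (neg_iff_of_sign_eq (walkWeight_sign hs j k)).mpr hneg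

private lemma fixup {n m : ℕ} (A' : Matrix (Fin n) (Fin n) ℝ) (B' : Matrix (Fin n) (Fin m) ℝ)
    (c : Fin n → ℝ) (hc : ∃ y, (ctrb A' B').mulVec y = c) (i : Fin n) (hi : 0 < c i)
    (hherd : ∀ z, c z < 0 → StrictlyHerdable A' B' z) :
    ∃ v : Fin n → ℝ, (∃ y, (ctrb A' B').mulVec y = v) ∧ (∀ z, 0 ≤ v z) ∧ 0 < v i := by
  classical
  have hw : ∀ z : Fin n, ∃ (w : Fin n → ℝ) (yw : Fin n × Fin m → ℝ),
      (ctrb A' B').mulVec yw = w ∧ (∀ a, 0 ≤ w a) ∧ (c z < 0 → 0 < w z) := by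
    intro z
    by_cases hz : c z < 0
    · obtain ⟨k, ⟨y, hy⟩, huni, hkz⟩ := hherd z hz
      refine ⟨fun a => Real.sign (k z) * k a, Real.sign (k z) • y, ?_, ?_, fun _ => ?_⟩
      · rw [Matrix.mulVec_smul, hy]; rfl
      · intro a
        by_cases ha : k a = 0
        · simp [ha]
        · rw [huni z a hkz ha]; exact Real.sign_mul_nonneg _
      · exact Real.sign_mul_pos_of_ne_zero _ hkz
    · exact ⟨0, 0, by simp [Matrix.mulVec_zero], fun a => le_refl 0,
        fun hzz => absurd hzz hz⟩
  choose w yw hyw hwpos hwz using hw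
  obtain ⟨y0, hy0⟩ := hc
  set lam : Fin n → ℝ := fun z => if c z < 0 then (1 - c z) / (w z z) else 0 with hlam
  have hlamnn : ∀ z, 0 ≤ lam z := by
    intro z
    rw [hlam]
    dsimp only
    split
    · next hz => exact div_nonneg (by linarith) (le_of_lt (hwz z hz))
    · exact le_refl 0
  have hnn : ∀ z a, 0 ≤ lam z * w z a := fun z a => mul_nonneg (hlamnn z) (hwpos z a)
  refine ⟨fun a => c a + ∑ z : Fin n, lam z * w z a,
    ⟨y0 + ∑ z : Fin n, lam z • yw z, ?_⟩, ?_, ?_⟩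
  · have hmain : (ctrb A' B').mulVec (y0 + ∑ z : Fin n, lam z • yw z)
        = c + ∑ z : Fin n, lam z • w z := by
      rw [Matrix.mulVec_add, hy0]
      congr 1
      rw [← Matrix.mulVecLin_apply, map_sum]
      refine Finset.sum_congr rfl fun z _ => ?_
      rw [map_smul, Matrix.mulVecLin_apply, hyw]
    rw [hmain]
    funext a
    simp [Finset.sum_apply, smul_eq_mul]
  · intro a
    by_cases hca : c a < 0
    · have h1 : lam a * w a a = 1 - c a := by
        rw [hlam]
        dsimp only
        rw [if_pos hca, div_mul_cancel₀ _ (ne_of_gt (hwz a hca))]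
      have h2 : lam a * w a a ≤ ∑ z : Fin n, lam z * w z a :=
        Finset.single_le_sum (fun z _ => hnn z a) (Finset.mem_univ a)
      dsimp only
      linarith
    · have h2 : 0 ≤ ∑ z : Fin n, lam z * w z a := Finset.sum_nonneg fun z _ => hnn z a
      dsimp only
      linarith [not_lt.mp hca]
  · have h2 : 0 ≤ ∑ z : Fin n, lam z * w z i := Finset.sum_nonneg fun z _ => hnn z i
    dsimp only
    linarith

/-- If every state is sign balanced, then the system is completely sign herdable: for
every pair with the same sign pattern as `(A, B)`, the range of its controllability
matrix contains an entrywise positive vector. -/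
theorem completelySignHerdable_of_signBalanced {n m : ℕ}
    (A : Matrix (Fin n) (Fin n) ℝ) (B : Matrix (Fin n) (Fin m) ℝ)
    (h : ∀ i : Fin n, SignBalanced A B i) :
    ∀ (A' : Matrix (Fin n) (Fin n) ℝ) (B' : Matrix (Fin n) (Fin m) ℝ),
      SamePattern A A' B B' →
      ∃ k : Fin n → ℝ, (∃ y : Fin n × Fin m → ℝ, (ctrb A' B').mulVec y = k) ∧
        ∀ i : Fin n, 0 < k i := by
  intro A' B' hs
  classical
  have key : ∀ i : Fin n, ∃ v : Fin n → ℝ,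
      (∃ y, (ctrb A' B').mulVec y = v) ∧ (∀ z, 0 ≤ v z) ∧ 0 < v i := by
    intro i
    obtain ⟨d, j, hd1, hdn, hmem, hnotboth, hbal⟩ := h i
    obtain ⟨e, rfl⟩ : ∃ e, d = e + 1 := ⟨d - 1, (Nat.succ_pred_eq_of_pos hd1).symm⟩
    have hen : e < n := Nat.lt_of_succ_le hdn
    set c0 : Fin n → ℝ := fun z => (A' ^ e * B') z j with hc0
    have hc0range : ∃ y, (ctrb A' B').mulVec y = c0 := by
      refine ⟨fun q => if q = ((⟨e, hen⟩ : Fin n), j) then 1 else 0, ?_⟩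
      funext z
      simp only [Matrix.mulVec, dotProduct, mul_ite, mul_one, mul_zero,
        Finset.sum_ite_eq', Finset.mem_univ, if_true, ctrb, hc0]
    have hcol : ∀ z, c0 z = ∑ k : Fin (e + 1) → Fin n,
        if k (Fin.last e) = z then walkWeight A' B' j k else 0 :=
      fun z => entry_eq_sum A' B' j e z
    have hiP_or : (i ∈ Pset A B j (e + 1) ∧ i ∉ Nset A B j (e + 1)) ∨
        (i ∈ Nset A B j (e + 1) ∧ i ∉ Pset A B j (e + 1)) := by
      rcases hmem with hN | hP
      · exact Or.inr ⟨hN, fun hP => hnotboth ⟨hN, hP⟩⟩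
      · exact Or.inl ⟨hP, fun hN => hnotboth ⟨hN, hP⟩⟩
    rcases hiP_or with ⟨hiP, hiN⟩ | ⟨hiN, hiP⟩
    · refine fixup A' B' c0 hc0range i ?_ ?_
      · rw [hcol i]
        obtain ⟨k0, hk0w, hk0pos⟩ := (mem_Pset_iff hs j i).mpr hiP
        refine Finset.sum_pos' (fun k _ => ?_) ⟨k0, Finset.mem_univ k0, ?_⟩
        · split
          · next hk =>
            by_contra hlt
            push_neg at hlt
            exact hiN ((mem_Nset_iff hs j i).mp
              ⟨k, hk ▸ isWalk_of_ne_zero (ne_of_lt hlt), hlt⟩)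
          · exact le_refl 0
        · rw [if_pos hk0w.1]; exact hk0pos
      · intro z hz
        have hex : ∃ k : Fin (e + 1) → Fin n,
            k (Fin.last e) = z ∧ walkWeight A' B' j k < 0 := by
          by_contra hno
          push_neg at hno
          have h0 : 0 ≤ c0 z := by
            rw [hcol z]
            refine Finset.sum_nonneg fun k _ => ?_
            split
            · next hk => exact hno k hk
            · exact le_refl 0
          linarith
        obtain ⟨k, hkz, hkneg⟩ := hex
        have hzN : z ∈ Nset A B j (e + 1) := (mem_Nset_iff hs j z).mp
          ⟨k, hkz ▸ isWalk_of_ne_zero (ne_of_lt hkneg), hkneg⟩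
        exact hbal z (Or.inl ⟨hiP, hzN⟩) A' B' hs
    · obtain ⟨y0, hy0⟩ := hc0range
      refine fixup A' B' (fun z => -(c0 z)) ⟨-y0, ?_⟩ i ?_ ?_
      · rw [Matrix.mulVec_neg, hy0]; rfl
      · obtain ⟨k0, hk0w, hk0neg⟩ := (mem_Nset_iff hs j i).mpr hiN
        show 0 < -(c0 i)
        rw [hcol i, ← Finset.sum_neg_distrib]
        refine Finset.sum_pos' (fun k _ => ?_) ⟨k0, Finset.mem_univ k0, ?_⟩
        · rw [neg_nonneg]
          split
          · next hk =>
            by_contra hlt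
            push_neg at hlt
            exact hiP ((mem_Pset_iff hs j i).mp
              ⟨k, hk ▸ isWalk_of_ne_zero (ne_of_gt hlt), hlt⟩)
          · exact le_refl 0
        · rw [if_pos hk0w.1]
          exact neg_pos.mpr hk0neg
      · intro z hz
        have hz' : 0 < c0 z := by
          have : -(c0 z) < 0 := hz
          linarith
        have hex : ∃ k : Fin (e + 1) → Fin n,
            k (Fin.last e) = z ∧ 0 < walkWeight A' B' j k := by
          by_contra hno
          push_neg at hno
          have h0 : c0 z ≤ 0 := by
            rw [hcol z]
            refine Finset.sum_nonpos fun k _ => ?_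
            split
            · next hk => exact hno k hk
            · exact le_refl 0
          linarith
        obtain ⟨k, hkz, hkpos⟩ := hex
        have hzP : z ∈ Pset A B j (e + 1) := (mem_Pset_iff hs j z).mp
          ⟨k, hkz ▸ isWalk_of_ne_zero (ne_of_gt hkpos), hkpos⟩
        exact hbal z (Or.inr ⟨hiN, hzP⟩) A' B' hs
  choose v hvr hvnn hvpos using key
  choose yv hyv using hvr
  refine ⟨fun a => ∑ i : Fin n, v i a, ⟨∑ i : Fin n, yv i, ?_⟩, ?_⟩
  · rw [← Matrix.mulVecLin_apply, map_sum]
    funext a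
    rw [Finset.sum_apply]
    refine Finset.sum_congr rfl fun i _ => ?_
    rw [Matrix.mulVecLin_apply, hyv]
  · intro a
    exact Finset.sum_pos' (fun i _ => hvnn i a) ⟨a, Finset.mem_univ a, hvpos a⟩
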